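/- Let A be a closed, densely defined operator with compact resolvent on a complex Hilbert space H, and let W be a Hilbert space continuously and densely embedded in H with D(A) ⊂ W. Let S ⊂ ρ(A) be such that M₀ := sup_{s∈S} ‖(A−s)⁻¹‖ < ∞ and M₁ := sup_{s∈S} ‖(A−s)⁻¹‖_{L(H,W)} < ∞. For 0 < ε < 1/M₀, L > ε, d = L·M₁ and δ_s = ‖(A−s)⁻¹‖²ε/(1 − ‖(A−s)⁻¹‖ε), one has σ_ε(A) ∩ ⋂_{s∈S} {z : |z − s| ≤ L − ε} ⊂ ⋂_{s∈S} [ (B_{δ_s}(W((A−s)⁻¹, d)))⁻¹ + s ]. -/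

import Mathlib

open Filter Topology Metric

noncomputable section

variable {H : Type*} [NormedAddCommGroup H] [InnerProductSpace ℂ H] [CompleteSpace H]

/-- `R : H →L[ℂ] H` is a (two-sided, everywhere defined) bounded inverse of `A - lam`,
i.e. `lam` belongs to the resolvent set of `A` with resolvent `R`. -/
def IsResolventAt (A : H →ₗ.[ℂ] H) (lam : ℂ) (R : H →L[ℂ] H) : Prop :=
  (∀ x : A.domain, R (A x - lam • (x : H)) = (x : H)) ∧
  ∀ y : H, ∃ hy : R y ∈ A.domain, A ⟨R y, hy⟩ - lam • R y = y

/-- The resolvent set `ρ(A)` of a (possibly unbounded) operator `A`. -/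
def presolventSet (A : H →ₗ.[ℂ] H) : Set ℂ :=
  {lam | ∃ R, IsResolventAt A lam R}

-- The resolvent operator `(A - lam)⁻¹` (with junk value `0` off the resolvent set).
open scoped Classical in
def resolventOf (A : H →ₗ.[ℂ] H) (lam : ℂ) : H →L[ℂ] H :=
  if h : ∃ R, IsResolventAt A lam R then h.choose else 0

/-- The `ε`-pseudospectrum `σ_ε(A) = {λ : ‖(A-λ)⁻¹‖ > 1/ε}`, where `‖(A-λ)⁻¹‖` is
understood as `∞` for `λ` in the spectrum. -/
def pseudoSpectrum (ε : ℝ) (A : H →ₗ.[ℂ] H) : Set ℂ :=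
  {lam | lam ∉ presolventSet A ∨ 1 / ε < ‖resolventOf A lam‖}

/-- The numerical range `W(T) = {⟨T x, x⟩ : ‖x‖ = 1}` of a bounded operator `T`;
`⟨T x, x⟩` (inner product linear in the first argument) is written as
`inner x (T x)` in the mathlib convention. -/
def numRange (T : H →L[ℂ] H) : Set ℂ :=
  {z | ∃ x : H, ‖x‖ = 1 ∧ z = (inner ℂ x (T x) : ℂ)}

/-- The numerical range of a (possibly unbounded) operator. -/
def pnumRange (A : H →ₗ.[ℂ] H) : Set ℂ :=
  {z | ∃ x : A.domain, ‖(x : H)‖ = 1 ∧ z = (inner ℂ (x : H) (A x) : ℂ)}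

/-- The numerical radius of a bounded operator. -/
def nradius (T : H →L[ℂ] H) : ℝ :=
  sSup ((fun z => ‖z‖) '' numRange T)

/-- The numerical range of a bounded operator on a subspace `U` of `H`. -/
def numRangeSub {U : Submodule ℂ H} (T : U →L[ℂ] U) : Set ℂ :=
  {z | ∃ x : U, ‖(x : H)‖ = 1 ∧ z = (inner ℂ (x : H) ((T x : U) : H) : ℂ)}

/-- `B_δ(U) = {z : dist (z, U) < δ}`, the `δ`-neighborhood of a set `U ⊆ ℂ`. -/
def nbhdSet (δ : ℝ) (U : Set ℂ) : Set ℂ :=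
  {z | ∃ u ∈ U, dist z u < δ}

/-- `U⁻¹ = {z⁻¹ : z ∈ U \ {0}}`. -/
def invSet (U : Set ℂ) : Set ℂ :=
  {z | ∃ u ∈ U, u ≠ 0 ∧ z = u⁻¹}

/-- `U + s = {z + s : z ∈ U}`. -/
def shiftSet (U : Set ℂ) (s : ℂ) : Set ℂ :=
  {z | ∃ u ∈ U, z = u + s}

/-!
Every `λ ∈ σ_ε(A)` has an `ε`-pseudo-eigenvector `x ∈ D(A)`, `‖x‖ = 1`, `‖(A - λ)x‖ < ε`: on `ρ(A)`
it is a normalised near-maximiser of `(A - λ)⁻¹`, and on `σ(A)` the Fredholm alternative for the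
compact resolvent yields a genuine eigenvector. With `R = (A - s)⁻¹` and `r = (A - λ)x` one has
`x = (λ - s)Rx + Rr`, so `1 ≤ ‖R‖(|λ - s| + ε)` and `⟨Rx, x⟩` lies within `‖R‖²ε / (1 - ‖R‖ε)` of
`(λ - s)⁻¹`. Moreover `x = R((λ - s)x + r)` is the image of a vector of norm at most `L`, so its
`W`-norm is at most `M₁ L`.
-/

open Set

theorem mem_shiftSet_invSet_nbhdSet {s lam u : ℂ} {U : Set ℂ} {δ : ℝ} (hne : lam - s ≠ 0)
    (hu : u ∈ U) (hlt : dist (lam - s)⁻¹ u < δ) : lam ∈ shiftSet (invSet (nbhdSet δ U)) s :=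
  ⟨lam - s, ⟨(lam - s)⁻¹, ⟨u, hu, hlt⟩, inv_ne_zero hne, (inv_inv _).symm⟩, by ring⟩

theorem mul_lt_one_of_le_of_lt_one_div {a M ε : ℝ} (ha : a ≤ M) (hε0 : 0 < ε)
    (hε : ε < 1 / M) : a * ε < 1 := by
  have hM : 0 < M := by
    by_contra! h
    linarith [one_div_nonpos.2 h]
  calc a * ε ≤ M * ε := by gcongr
    _ < 1 := by rwa [lt_div_iff₀ hM, mul_comm] at hε

section

omit [CompleteSpace H]

variable {A : H →ₗ.[ℂ] H} {s lam : ℂ} {R : H →L[ℂ] H}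

theorem isResolventAt_resolventOf (h : s ∈ presolventSet A) :
    IsResolventAt A s (resolventOf A s) := by
  have h' : ∃ R, IsResolventAt A s R := h
  rw [resolventOf, dif_pos h']
  exact h'.choose_spec

theorem IsResolventAt.eq_smul_apply_add_apply (hR : IsResolventAt A s R) (x : A.domain)
    (lam : ℂ) : (x : H) = (lam - s) • R x + R (A x - lam • (x : H)) :=
  calc (x : H) = R (A x - s • (x : H)) := (hR.1 x).symm
    _ = (lam - s) • R x + R (A x - lam • (x : H)) := by
      rw [← map_smul, ← map_add]
      congr 1
      module

theorem IsResolventAt.mul_inv_oneSub (hR : IsResolventAt A s R) (u : (H →L[ℂ] H)ˣ)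
    (hu : (u : H →L[ℂ] H) = 1 - (lam - s) • R) : IsResolventAt A lam (R * ↑u⁻¹) := by
  set B : H →L[ℂ] H := ↑u⁻¹
  have hcomm : Commute R B := by
    refine Commute.units_inv_right ?_
    rw [hu]
    exact (Commute.one_right R).sub_right ((Commute.refl R).smul_right _)
  have hBu : ∀ y, B ((u : H →L[ℂ] H) y) = y := fun y => by
    rw [← mul_apply_eq_comp, u.inv_mul]; rfl
  have huB : ∀ y, (u : H →L[ℂ] H) (B y) = y := fun y => by
    rw [← mul_apply_eq_comp, u.mul_inv]; rfl
  constructor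
  · intro x
    have hx : R (A x - lam • (x : H)) = (u : H →L[ℂ] H) x := by
      rw [hu]
      simp only [sub_apply, one_apply_eq_self, smul_apply]
      nth_rewrite 2 [hR.eq_smul_apply_add_apply x lam]
      abel
    calc (R * B) (A x - lam • (x : H)) = B (R (A x - lam • (x : H))) := by
          rw [hcomm.eq]; rfl
      _ = x := by rw [hx, hBu]
  · intro y
    obtain ⟨hy, hAy⟩ := hR.2 (B y)
    refine ⟨hy, ?_⟩
    calc A ⟨R (B y), hy⟩ - lam • R (B y)
        = (A ⟨R (B y), hy⟩ - s • R (B y)) - (lam - s) • R (B y) := by module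
      _ = (u : H →L[ℂ] H) (B y) := by
          rw [hAy, hu]
          simp
      _ = y := huB y

theorem IsResolventAt.mem_presolventSet_of_isUnit (hR : IsResolventAt A s R)
    (h : IsUnit (1 - (lam - s) • R)) : lam ∈ presolventSet A := by
  obtain ⟨u, hu⟩ := h
  exact ⟨_, hR.mul_inv_oneSub u hu⟩

theorem IsResolventAt.exists_norm_sub_smul_lt (hR : IsResolventAt A lam R) {ε : ℝ}
    (hε : 0 < ε) (h : 1 / ε < ‖R‖) : ∃ x : A.domain, ‖A x - lam • (x : H)‖ < ε * ‖(x : H)‖ := by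
  obtain ⟨y, hy1, hy⟩ := R.exists_lt_apply_of_lt_opNorm h
  obtain ⟨hdom, hAy⟩ := hR.2 y
  refine ⟨⟨R y, hdom⟩, ?_⟩
  show ‖A ⟨R y, hdom⟩ - lam • R y‖ < ε * ‖R y‖
  calc ‖A ⟨R y, hdom⟩ - lam • R y‖ = ‖y‖ := by rw [hAy]
    _ < ε * (1 / ε) := by rwa [mul_one_div_cancel hε.ne']
    _ < ε * ‖R y‖ := by gcongr

theorem LinearPMap.exists_norm_eq_one_of_norm_sub_smul_lt {ε : ℝ} (x : A.domain)
    (h : ‖A x - lam • (x : H)‖ < ε * ‖(x : H)‖) :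
    ∃ y : A.domain, ‖(y : H)‖ = 1 ∧ ‖A y - lam • (y : H)‖ < ε := by
  have hx : 0 < ‖(x : H)‖ := by
    by_contra! h0
    rw [le_antisymm h0 (norm_nonneg _), mul_zero] at h
    exact (norm_nonneg _).not_gt h
  refine ⟨((‖(x : H)‖ : ℂ)⁻¹) • x, ?_, ?_⟩
  · simp [norm_smul, hx.ne']
  · rw [A.map_smul, Submodule.coe_smul, smul_comm, ← smul_sub, norm_smul, norm_inv,
      Complex.norm_real, norm_norm, inv_mul_lt_iff₀ hx, mul_comm]
    exact h

theorem IsResolventAt.exists_eigenvector_of_notMem_presolventSet [CompleteSpace H]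
    (hR : IsResolventAt A s R) (hc : IsCompactOperator R) (hlam : lam ∉ presolventSet A) :
    ∃ x : A.domain, (x : H) ≠ 0 ∧ A x = lam • (x : H) := by
  have hls : lam - s ≠ 0 := sub_ne_zero.2 fun h => hlam (h ▸ ⟨R, hR⟩)
  rcases hc.hasEigenvalue_or_mem_resolventSet (inv_ne_zero hls) with hev | hres
  · obtain ⟨v, hv⟩ := hev.exists_hasEigenvector
    obtain ⟨hdom, hAv⟩ := hR.2 v
    have hRv : R v = (lam - s)⁻¹ • v := hv.apply_eq_smul
    have hv' : v = (lam - s) • R v := by rw [hRv, smul_inv_smul₀ hls]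
    refine ⟨⟨R v, hdom⟩, ?_, ?_⟩
    · simpa [hRv, hls] using hv.2
    · calc A ⟨R v, hdom⟩ = (A ⟨R v, hdom⟩ - s • R v) + s • R v := by abel
        _ = lam • R v := by
          rw [hAv]
          nth_rewrite 1 [hv']
          module
  · refine absurd (hR.mem_presolventSet_of_isUnit ?_) hlam
    have h : 1 - (lam - s) • R = (Units.mk0 _ hls) • (algebraMap ℂ _ (lam - s)⁻¹ - R) := by
      rw [Units.smul_mk0, smul_sub, Algebra.algebraMap_eq_smul_one, smul_smul,
        mul_inv_cancel₀ hls, one_smul]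
    rw [h]
    exact (spectrum.mem_resolventSet_iff.1 hres).smul _

theorem exists_norm_sub_smul_lt_of_mem_pseudoSpectrum [CompleteSpace H] {μ : ℂ}
    (hμ : μ ∈ presolventSet A) (hc : IsCompactOperator (resolventOf A μ)) {ε : ℝ} (hε : 0 < ε)
    (hlam : lam ∈ pseudoSpectrum ε A) :
    ∃ x : A.domain, ‖(x : H)‖ = 1 ∧ ‖A x - lam • (x : H)‖ < ε := by
  suffices ∃ x : A.domain, ‖A x - lam • (x : H)‖ < ε * ‖(x : H)‖ by
    obtain ⟨x, hx⟩ := this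
    exact LinearPMap.exists_norm_eq_one_of_norm_sub_smul_lt x hx
  by_cases hρ : lam ∈ presolventSet A
  · exact (isResolventAt_resolventOf hρ).exists_norm_sub_smul_lt hε
      (hlam.resolve_left (not_not.2 hρ))
  · obtain ⟨x, hx0, hAx⟩ :=
      (isResolventAt_resolventOf hμ).exists_eigenvector_of_notMem_presolventSet hc hρ
    exact ⟨x, by rw [hAx, sub_self, norm_zero]; exact mul_pos hε (norm_pos_iff.2 hx0)⟩

theorem dist_inv_inner_apply_lt {x r : H} {c : ℂ} {ε : ℝ} (hx : ‖x‖ = 1)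
    (hxr : x = c • R x + R r) (hr : ‖r‖ < ε) (hRε : ‖R‖ * ε < 1) :
    c ≠ 0 ∧ dist c⁻¹ (inner ℂ x (R x)) < ‖R‖ ^ 2 * ε / (1 - ‖R‖ * ε) := by
  have hlow : 1 - ‖R‖ * ε ≤ ‖c‖ * ‖R‖ := by
    have : 1 ≤ ‖c‖ * ‖R‖ + ‖R‖ * ε :=
      calc 1 = ‖c • R x + R r‖ := by rw [← hxr, hx]
        _ ≤ ‖c‖ * (‖R‖ * ‖x‖) + ‖R‖ * ‖r‖ := by
          grw [norm_add_le, norm_smul, R.le_opNorm, R.le_opNorm]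
        _ ≤ ‖c‖ * ‖R‖ + ‖R‖ * ε := by rw [hx, mul_one]; gcongr
    linarith
  have hcR : 0 < ‖c‖ * ‖R‖ := by linarith
  have hc : 0 < ‖c‖ := pos_of_mul_pos_left hcR (norm_nonneg _)
  have hR : 0 < ‖R‖ := pos_of_mul_pos_right hcR (norm_nonneg _)
  have hc0 : c ≠ 0 := norm_pos_iff.1 hc
  refine ⟨hc0, ?_⟩
  have hinner : inner ℂ x (R x) = c⁻¹ * (1 - inner ℂ x (R r)) := by
    have hRx : R x = c⁻¹ • (x - R r) := by
      rw [eq_inv_smul_iff₀ hc0, eq_sub_iff_add_eq, ← hxr]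
    rw [hRx, inner_smul_right, inner_sub_right, inner_self_eq_norm_sq_to_K, hx]
    norm_num
  calc dist c⁻¹ (inner ℂ x (R x)) = ‖c‖⁻¹ * ‖inner ℂ x (R r)‖ := by
        rw [dist_eq_norm, hinner, ← norm_inv, ← norm_mul]
        congr 1
        ring
    _ ≤ ‖c‖⁻¹ * (‖R‖ * ‖r‖) := by
        grw [norm_inner_le_norm, hx, one_mul, R.le_opNorm]
    _ < ‖c‖⁻¹ * (‖R‖ * ε) := by gcongr
    _ ≤ ‖R‖ / (1 - ‖R‖ * ε) * (‖R‖ * ε) := by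
        have hε : 0 < ε := (norm_nonneg r).trans_lt hr
        gcongr
        rw [inv_le_iff_one_le_mul₀ hc, div_mul_eq_mul_div, le_div_iff₀ (by linarith)]
        linarith
    _ = ‖R‖ ^ 2 * ε / (1 - ‖R‖ * ε) := by ring

end

theorem pseudospectrum_inter_balls_subset_iInter_shifted_restricted_general
    (A : H →ₗ.[ℂ] H)
    {W : Type*} [NormedAddCommGroup W] [InnerProductSpace ℂ W]
    (ι : W →L[ℂ] H)
    (hcpt : ∃ μ ∈ presolventSet A, IsCompactOperator (⇑(resolventOf A μ) : H → H))
    (S : Set ℂ) (hS : S ⊆ presolventSet A)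
    (Rw : ℂ → H →L[ℂ] W)
    (hRw : ∀ s ∈ S, ∀ x, ι (Rw s x) = resolventOf A s x)
    (hM0 : BddAbove ((fun s => ‖resolventOf A s‖) '' S))
    (hM1 : BddAbove ((fun s => ‖Rw s‖) '' S))
    (ε : ℝ) (hε0 : 0 < ε)
    (hε : ε < 1 / sSup ((fun s => ‖resolventOf A s‖) '' S))
    (L : ℝ)
    (d : ℝ) (hd : d = L * sSup ((fun s => ‖Rw s‖) '' S)) :
    pseudoSpectrum ε A ∩ (⋂ s ∈ S, Metric.closedBall s (L - ε)) ⊆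
      ⋂ s ∈ S,
        shiftSet
          (invSet (nbhdSet
            (‖resolventOf A s‖ ^ 2 * ε / (1 - ‖resolventOf A s‖ * ε))
            {z : ℂ | ∃ w : W, ‖ι w‖ = 1 ∧ ‖w‖ ≤ d ∧
              z = (inner ℂ (ι w) (resolventOf A s (ι w)) : ℂ)})) s := by
  rintro lam ⟨hlam, hballs⟩
  obtain ⟨μ, hμ, hμc⟩ := hcpt
  obtain ⟨x, hx1, hxr⟩ := exists_norm_sub_smul_lt_of_mem_pseudoSpectrum hμ hμc hε0 hlam
  refine mem_iInter₂.2 fun s hs => ?_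
  have hls : ‖lam - s‖ ≤ L - ε := mem_closedBall_iff_norm.1 (mem_iInter₂.1 hballs s hs)
  set r := A x - lam • (x : H)
  have hRx := (isResolventAt_resolventOf (hS hs)).eq_smul_apply_add_apply x lam
  have hRε : ‖resolventOf A s‖ * ε < 1 :=
    mul_lt_one_of_le_of_lt_one_div (le_csSup hM0 ⟨s, hs, rfl⟩) hε0 hε
  obtain ⟨hne, hlt⟩ := dist_inv_inner_apply_lt hx1 hRx hxr hRε
  set z := (lam - s) • (x : H) + r
  have hw : ι (Rw s z) = x := by rw [hRw s hs, map_add, map_smul]; exact hRx.symm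
  have hz : ‖z‖ ≤ L := by
    grw [norm_add_le, norm_smul, hx1, hls, hxr]
    linarith
  have hwd : ‖Rw s z‖ ≤ d :=
    calc ‖Rw s z‖ ≤ ‖Rw s‖ * L := (Rw s).le_opNorm_of_le hz
      _ ≤ sSup ((fun s => ‖Rw s‖) '' S) * L := by
        gcongr
        · exact (norm_nonneg z).trans hz
        · exact le_csSup hM1 ⟨s, hs, rfl⟩
      _ = d := by rw [hd, mul_comm]
  exact mem_shiftSet_invSet_nbhdSet hne ⟨Rw s z, hw ▸ hx1, hwd, by rw [hw]⟩ hlt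

/-- Theorem 4.3. -/
theorem pseudospectrum_inter_balls_subset_iInter_shifted_restricted
    (A : H →ₗ.[ℂ] H)
    (hclosed : IsClosed (A.graph : Set (H × H)))
    (hdense : Dense (A.domain : Set H))
    {W : Type*} [NormedAddCommGroup W] [InnerProductSpace ℂ W] [CompleteSpace W]
    (ι : W →L[ℂ] H) (hιinj : Function.Injective ι) (hιdense : DenseRange ι)
    (hdom : (A.domain : Set H) ⊆ Set.range ι)
    (hcpt : ∃ μ ∈ presolventSet A, IsCompactOperator (⇑(resolventOf A μ) : H → H))
    (S : Set ℂ) (hS : S ⊆ presolventSet A)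
    (Rw : ℂ → H →L[ℂ] W)
    (hRw : ∀ s ∈ S, ∀ x, ι (Rw s x) = resolventOf A s x)
    (hM0 : BddAbove ((fun s => ‖resolventOf A s‖) '' S))
    (hM1 : BddAbove ((fun s => ‖Rw s‖) '' S))
    (ε : ℝ) (hε0 : 0 < ε)
    (hε : ε < 1 / sSup ((fun s => ‖resolventOf A s‖) '' S))
    (L : ℝ) (hLε : ε < L)
    (d : ℝ) (hd : d = L * sSup ((fun s => ‖Rw s‖) '' S)) :
    pseudoSpectrum ε A ∩ (⋂ s ∈ S, Metric.closedBall s (L - ε)) ⊆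
      ⋂ s ∈ S,
        shiftSet
          (invSet (nbhdSet
            (‖resolventOf A s‖ ^ 2 * ε / (1 - ‖resolventOf A s‖ * ε))
            {z : ℂ | ∃ w : W, ‖ι w‖ = 1 ∧ ‖w‖ ≤ d ∧
              z = (inner ℂ (ι w) (resolventOf A s (ι w)) : ℂ)})) s :=
  pseudospectrum_inter_balls_subset_iInter_shifted_restricted_general A ι hcpt S hS Rw hRw hM0 hM1 ε
    hε0 hε L d hd
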